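/- Let 1 ≤ a ≤ √3 and c = (9/8)(a + 1/a). Then the supremum of x₁² + x₂² over all points x = (x₁,x₂,x₃) ∈ ℝ³ satisfying x₁² + x₂² + x₃² = K and a x₁² + (1/a)x₂² - 3x₃ - c = 0 tends to 0 as K tends to c²/9 from the right. -/
import Mathlib

set_option maxHeartbeats 1000000

open Real Filter Topology

lemma key_bound_stmt16 (a c K : ℝ) (ha1 : 1 ≤ a) (ha3 : a ^ 2 ≤ 3)
    (h8 : 8 * a * c = 9 * (a ^ 2 + 1))
    (hK1 : c ^ 2 < 9 * K) (hK2 : 9 * K ≤ c ^ 2 + 1)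
    (x₁ x₂ x₃ : ℝ) (h1 : x₁ ^ 2 + x₂ ^ 2 + x₃ ^ 2 = K)
    (h2 : a * x₁ ^ 2 + (1 / a) * x₂ ^ 2 - 3 * x₃ - c = 0) :
    (x₁ ^ 2 + x₂ ^ 2) ^ 2 ≤ 9 * K - c ^ 2 := by
  have ha0 : (0:ℝ) < a := by linarith
  have ha0' : a ≠ 0 := ne_of_gt ha0
  have haa : 1 ≤ a ^ 2 := by nlinarith
  set s := x₁ ^ 2 with hs_def
  set t := x₂ ^ 2 with ht_def
  have hs : 0 ≤ s := sq_nonneg _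
  have ht : 0 ≤ t := sq_nonneg _
  set u := 3 * x₃ with hu_def
  have hQ : a ^ 2 * s + t = a * (u + c) := by
    field_simp at h2
    linear_combination h2
  have hKe : 9 * (s + t) + u ^ 2 = 9 * K := by
    rw [hu_def]; linear_combination 9 * h1
  have hc94 : (9:ℝ)/4 ≤ c := by nlinarith [sq_nonneg (a - 1)]
  have ha2' : a ≤ 2 := by nlinarith
  have hac : a * c ≤ 9 / 2 := by linarith
  have hQ0 : 0 ≤ u + c := by
    have h : a * 0 ≤ a * (u + c) := by
      have := add_nonneg (mul_nonneg (sq_nonneg a) hs) ht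
      rw [hQ] at this; linarith
    exact le_of_mul_le_mul_left h ha0
  have hC : s + t ≤ K := by nlinarith [sq_nonneg u]
  have hD : a * (s + t) ≤ c := by
    have P1 : a * (s + t) ≤ a * K := mul_le_mul_of_nonneg_left hC ha0.le
    have P2 : a * (9 * K) ≤ a * (c ^ 2 + 1) := mul_le_mul_of_nonneg_left hK2 ha0.le
    have P3 : (a * c) * c ≤ (9 / 2) * c := mul_le_mul_of_nonneg_right hac (by linarith)
    nlinarith [P1, P2, P3]
  have hE : u + c ≤ a * (s + t) := by
    have hx : (a ^ 2 - 1) * t ≥ 0 := mul_nonneg (by linarith) ht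
    have h : a * (u + c) ≤ a * (a * (s + t)) := by nlinarith [hQ, hx]
    exact le_of_mul_le_mul_left h ha0
  have hF : (a * (s + t)) ^ 2 - 2 * c * (a * (s + t)) ≤ (u + c) ^ 2 - 2 * c * (u + c) := by
    nlinarith [mul_nonneg (sub_nonneg.2 hE) (by linarith : (0:ℝ) ≤ 2 * c - a * (s + t) - (u + c))]
  have hB : 9 * (s + t) + (u + c) ^ 2 - 2 * c * (u + c) = 9 * K - c ^ 2 := by
    linear_combination hKe
  have X1 : 0 ≤ (9 - 2 * (a * c)) * (s + t) := mul_nonneg (by linarith) (by linarith)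
  have X2 : 0 ≤ (a ^ 2 - 1) * (s + t) ^ 2 := mul_nonneg (by linarith) (sq_nonneg _)
  nlinarith [hB, hF, X1, X2]

/-- On the intersection of the sphere of radius `√K` with the zero Hamiltonian
level of the SU(2) Lie–Poisson system, `M₁² + M₂²` tends to `0` uniformly as
`K → c(a)²/9` from the right. -/
theorem stmt_16 (a : ℝ) (ha1 : 1 ≤ a) (ha2 : a ≤ Real.sqrt 3)
    (c : ℝ) (hc : c = 9 / 8 * (a + 1 / a)) :
    Tendsto (fun K : ℝ =>
        sSup {r : ℝ | ∃ x₁ x₂ x₃ : ℝ,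
          x₁ ^ 2 + x₂ ^ 2 + x₃ ^ 2 = K ∧
          a * x₁ ^ 2 + (1 / a) * x₂ ^ 2 - 3 * x₃ - c = 0 ∧
          r = x₁ ^ 2 + x₂ ^ 2})
      (𝓝[>] (c ^ 2 / 9)) (𝓝 0) := by
  have ha0 : (0:ℝ) < a := by linarith
  have ha0' : a ≠ 0 := ne_of_gt ha0
  have ha3 : a ^ 2 ≤ 3 := by
    nlinarith [Real.sq_sqrt (by norm_num : (3:ℝ) ≥ 0), Real.sqrt_nonneg 3]
  have h8 : 8 * a * c = 9 * (a ^ 2 + 1) := by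
    rw [hc]; field_simp
  apply tendsto_of_tendsto_of_tendsto_of_le_of_le' (g := fun _ : ℝ => (0:ℝ))
      (h := fun K : ℝ => Real.sqrt (9 * K - c ^ 2))
  · exact tendsto_const_nhds
  · have hcont : Tendsto (fun K : ℝ => Real.sqrt (9 * K - c ^ 2)) (𝓝 (c ^ 2 / 9))
        (𝓝 (Real.sqrt (9 * (c ^ 2 / 9) - c ^ 2))) :=
      (Real.continuous_sqrt.comp (by continuity)).tendsto _
    have : Real.sqrt (9 * (c ^ 2 / 9) - c ^ 2) = 0 := by
      rw [show 9 * (c ^ 2 / 9) - c ^ 2 = 0 by ring, Real.sqrt_zero]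
    rw [this] at hcont
    exact hcont.mono_left nhdsWithin_le_nhds
  · filter_upwards [self_mem_nhdsWithin] with K hK
    apply Real.sSup_nonneg
    rintro r ⟨x₁, x₂, x₃, -, -, rfl⟩
    positivity
  · have hev : ∀ᶠ K in 𝓝[>] (c ^ 2 / 9), K < c ^ 2 / 9 + 1 / 9 :=
      eventually_nhdsWithin_of_eventually_nhds (eventually_lt_nhds (by linarith))
    filter_upwards [hev, self_mem_nhdsWithin] with K hKu hKl
    have hK1 : c ^ 2 < 9 * K := by
      have : c ^ 2 / 9 < K := hKl
      linarith
    have hK2 : 9 * K ≤ c ^ 2 + 1 := by linarith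
    apply Real.sSup_le _ (Real.sqrt_nonneg _)
    rintro r ⟨x₁, x₂, x₃, h1, h2, rfl⟩
    have hr0 : (0:ℝ) ≤ x₁ ^ 2 + x₂ ^ 2 := by positivity
    calc x₁ ^ 2 + x₂ ^ 2 = Real.sqrt ((x₁ ^ 2 + x₂ ^ 2) ^ 2) := (Real.sqrt_sq hr0).symm
      _ ≤ Real.sqrt (9 * K - c ^ 2) :=
        Real.sqrt_le_sqrt (key_bound_stmt16 a c K ha1 ha3 h8 hK1 hK2 x₁ x₂ x₃ h1 h2)
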